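/- arXiv:2412.20642 — 4 statements merged into one kernel-verified Lean document; each statement's English description precedes it below -/
import Mathlib

section
/- Let y : ℂ × ℝ → ℂ be such that for each λ, y(λ,·) solves -y'' + q·y = λ²·y on (0,a) with y(λ,0) = 1 and y'(λ,0) = β₀ + iα₀λ, where q : (0,a) → ℂ is continuous, α₀ ≥ 0 real, β₀ ∈ ℂ. Define Δ₊(λ) = y'(λ,a) + (iαλ + β)·y(λ,a) and Δ₋(λ) = y'(λ,a) - (iαλ - β)·y(λ,a) with α > 0 real, β ∈ ℂ. Then Δ₊(λ)·Δ₊(-λ) - Δ₋(λ)·Δ₋(-λ) = 4·α·α₀·λ² for all λ ∈ ℂ. -/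
open Complex

theorem stmt6 (a : ℝ) (ha : 0 < a) (q : ℝ → ℂ) (hq : ContinuousOn q (Set.Icc 0 a))
    (α₀ : ℝ) (hα₀ : 0 ≤ α₀) (β₀ : ℂ) (α : ℝ) (hα : 0 < α) (β : ℂ)
    (y yd : ℂ → ℝ → ℂ)
    (hy : ∀ (lam : ℂ) (x : ℝ), x ∈ Set.Icc 0 a → HasDerivAt (y lam) (yd lam x) x)
    (hyd : ∀ (lam : ℂ) (x : ℝ), x ∈ Set.Icc 0 a →
      HasDerivAt (yd lam) (q x * y lam x - lam ^ 2 * y lam x) x)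
    (hy0 : ∀ lam : ℂ, y lam 0 = 1)
    (hyd0 : ∀ lam : ℂ, yd lam 0 = β₀ + Complex.I * α₀ * lam)
    (Δp Δm : ℂ → ℂ)
    (hΔp : ∀ lam, Δp lam = yd lam a + (Complex.I * α * lam + β) * y lam a)
    (hΔm : ∀ lam, Δm lam = yd lam a - (Complex.I * α * lam - β) * y lam a) :
    ∀ lam : ℂ, Δp lam * Δp (-lam) - Δm lam * Δm (-lam) = 4 * α * α₀ * lam ^ 2 := by
  intro lam
  set W : ℝ → ℂ := fun x => y lam x * yd (-lam) x - yd lam x * y (-lam) x with hWdef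
  have hderiv : ∀ x ∈ Set.Icc (0:ℝ) a, HasDerivAt W 0 x := by
    intro x hx
    have h1 := hy lam x hx
    have h2 := hy (-lam) x hx
    have h3 := hyd lam x hx
    have h4 := hyd (-lam) x hx
    have h := (h1.mul h4).sub (h3.mul h2)
    convert h using 1
    case e'_4 => rfl
    case e'_8 => rfl
    case e'_9 => ring
  have hconst : ∀ x ∈ Set.Icc (0:ℝ) a, W x = W 0 := by
    apply constant_of_has_deriv_right_zero
    · exact fun x hx => (hderiv x hx).continuousAt.continuousWithinAt
    · exact fun x hx => ((hderiv x (Set.Ico_subset_Icc_self hx)).hasDerivWithinAt)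
  have key : y lam a * yd (-lam) a - yd lam a * y (-lam) a
      = -2 * Complex.I * α₀ * lam := by
    have hWa := hconst a (Set.right_mem_Icc.mpr ha.le)
    have hW0 : W 0 = -2 * Complex.I * α₀ * lam := by
      simp only [hWdef, hy0, hyd0]
      ring
    simpa [hWdef] using hWa.trans hW0
  rw [hΔp, hΔp, hΔm, hΔm]
  linear_combination (2 * Complex.I * (α:ℂ) * lam) * key
    - 4 * (α:ℂ) * (α₀:ℂ) * lam ^ 2 * Complex.I_sq
end

section
/- Let q : [0,a] → ℝ be continuous, α₀ ≥ 0, α > 0, β₀, β ∈ ℝ. Suppose λ₀ = σ - iτ with σ, τ ∈ ℝ, τ > 0, is an eigenvalue of the generalized Regge problem: there is a nonzero (complex-valued) solution u of -u'' + q·u = λ₀²·u on [0,a] with u'(0) = (iα₀λ₀ + β₀)·u(0) and u'(a) = -(iαλ₀ + β)·u(a), normalized so that u(0) = 1. Then σ = 0 and -2στ·∫₀ᵃ |u(x)|² dx = ασ·|u(a)|² + σα₀, i.e., every eigenvalue in the open lower half-plane lies on the negative imaginary axis. -/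
open Complex

theorem stmt9 (a : ℝ) (ha : 0 < a) (q : ℝ → ℝ) (hq : ContinuousOn q (Set.Icc 0 a))
    (α₀ : ℝ) (hα₀ : 0 ≤ α₀) (α : ℝ) (hα : 0 < α) (β₀ β : ℝ)
    (σ τ : ℝ) (hτ : 0 < τ) (lam₀ : ℂ) (hlam₀ : lam₀ = (σ : ℂ) - Complex.I * τ)
    (u ud : ℝ → ℂ)
    (hu : ∀ x ∈ Set.Icc 0 a, HasDerivAt u (ud x) x)
    (hud : ∀ x ∈ Set.Icc 0 a, HasDerivAt ud ((q x : ℂ) * u x - lam₀ ^ 2 * u x) x)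
    (hu0 : u 0 = 1)
    (hbc0 : ud 0 = (Complex.I * α₀ * lam₀ + β₀) * u 0)
    (hbca : ud a = -(Complex.I * α * lam₀ + β) * u a) :
    σ = 0 ∧
      -2 * σ * τ * ∫ x in (0:ℝ)..a, ‖u x‖ ^ 2
        = α * σ * ‖u a‖ ^ 2 + σ * α₀ := by
  -- continuity of u, ud on Icc
  have hcu : ContinuousOn u (Set.Icc 0 a) := fun x hx => ((hu x hx).continuousAt).continuousWithinAt
  have hcud : ContinuousOn ud (Set.Icc 0 a) := fun x hx => ((hud x hx).continuousAt).continuousWithinAt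
  set N : ℝ → ℝ := fun x => Complex.normSq (u x) with hN
  have hcN : ContinuousOn N (Set.Icc 0 a) := Complex.continuous_normSq.comp_continuousOn hcu
  -- derivative of h x = (ud x * conj (u x)).im
  set h : ℝ → ℝ := fun x => (ud x * (starRingEnd ℂ) (u x)).im with hh
  have key : ∀ x ∈ Set.uIcc (0:ℝ) a, HasDerivAt h (2 * σ * τ * N x) x := by
    intro x hx
    rw [Set.uIcc_of_le ha.le] at hx
    have h1 : HasDerivAt (fun y => ud y * (starRingEnd ℂ) (u y))
        (((q x : ℂ) * u x - lam₀ ^ 2 * u x) * (starRingEnd ℂ) (u x) + ud x * (starRingEnd ℂ) (ud x)) x :=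
      (hud x hx).mul ((hu x hx).star)
    have h2 := (Complex.imCLM.hasFDerivAt.comp_hasDerivAt x h1)
    convert h2 using 1
    · rfl
    · rfl
    · rfl
    have : ((q x : ℂ) * u x - lam₀ ^ 2 * u x) * (starRingEnd ℂ) (u x) + ud x * (starRingEnd ℂ) (ud x)
        = ((q x : ℂ) - lam₀ ^ 2) * (Complex.normSq (u x) : ℂ) + (Complex.normSq (ud x) : ℂ) := by
      rw [← Complex.mul_conj, ← Complex.mul_conj]; ring
    simp only [ContinuousLinearMap.coe_comp', Complex.imCLM_apply, this, hlam₀]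
    simp [Complex.add_im, Complex.mul_im, Complex.normSq]
    ring_nf
    simp [← Complex.ofReal_pow]
    simp [hN, Complex.normSq_apply]
    ring
  have hint : IntervalIntegrable (fun x => 2 * σ * τ * N x) MeasureTheory.volume 0 a := by
    apply ContinuousOn.intervalIntegrable
    rw [Set.uIcc_of_le ha.le]
    exact continuousOn_const.mul hcN
  have hIBP := intervalIntegral.integral_eq_sub_of_hasDerivAt key hint
  -- evaluate the boundary terms
  have hha : h a = -(α * σ) * N a := by
    simp only [hh, hbca, hlam₀]
    rw [show -(Complex.I * ↑α * ((σ:ℂ) - Complex.I * τ) + ↑β) * u a * (starRingEnd ℂ) (u a)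
        = -(Complex.I * ↑α * ((σ:ℂ) - Complex.I * τ) + ↑β) * ((Complex.normSq (u a) : ℝ) : ℂ) by
      rw [← Complex.mul_conj]; ring]
    simp [Complex.ext_iff, hN]
  have hh0 : h 0 = α₀ * σ := by
    simp only [hh, hbc0, hu0, hlam₀]
    simp [Complex.ext_iff]
  rw [hha, hh0] at hIBP
  -- positivity of ∫ N
  have hNpos : (0:ℝ) < ∫ x in (0:ℝ)..a, N x := by
    rw [intervalIntegral.integral_pos_iff_support_of_nonneg_ae
      (Filter.Eventually.of_forall (fun x => Complex.normSq_nonneg _))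
      (by apply ContinuousOn.intervalIntegrable; rwa [Set.uIcc_of_le ha.le])]
    refine ⟨ha, ?_⟩
    have hcont : ContinuousAt N 0 :=
      Complex.continuous_normSq.continuousAt.comp (hu 0 (Set.left_mem_Icc.2 ha.le)).continuousAt
    have hN0 : N 0 = 1 := by simp [hN, hu0]
    have hev : ∀ᶠ x in nhds (0:ℝ), 0 < N x :=
      hcont.eventually (eventually_gt_nhds (by rw [hN0]; norm_num))
    rcases Metric.eventually_nhds_iff.1 hev with ⟨ε, hε, hball⟩
    set b := min (ε / 2) a with hb
    have hb0 : 0 < b := lt_min (by linarith) ha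
    have hsub : Set.Ioc 0 b ⊆ Function.support N ∩ Set.Ioc 0 a := by
      intro x hx
      refine ⟨?_, hx.1, hx.2.trans (min_le_right _ _)⟩
      have : dist x 0 < ε := by
        rw [Real.dist_eq, sub_zero, abs_of_pos hx.1]
        exact lt_of_le_of_lt (hx.2.trans (min_le_left _ _)) (by linarith)
      exact (hball this).ne'
    calc (0:ENNReal) < MeasureTheory.volume (Set.Ioc 0 b) := by
          rw [Real.volume_Ioc]; simpa using hb0
      _ ≤ _ := MeasureTheory.measure_mono hsub
  rw [intervalIntegral.integral_const_mul] at hIBP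
  have hC : 0 < 2 * τ * (∫ x in (0:ℝ)..a, N x) + α * N a + α₀ := by
    have : 0 ≤ α * N a := mul_nonneg hα.le (Complex.normSq_nonneg _)
    nlinarith
  have hσ : σ = 0 := by
    have hprod : σ * (2 * τ * (∫ x in (0:ℝ)..a, N x) + α * N a + α₀) = 0 := by
      linear_combination hIBP
    rcases mul_eq_zero.1 hprod with h | h
    · exact h
    · exact absurd h hC.ne'
  exact ⟨hσ, by rw [hσ]; ring⟩
end

section
/- Let a > 0, σ₁, σ₂ ∈ ℝ with σ₁ ≠ ±σ₂, and let φ¹(λ) = λ(σ₁ cos(λa) + iσ₂ sin(λa)). For every δ > 0 there exist constants C_δ > 0 and R > 0 such that |φ¹(λ)| ≥ C_δ·|λ|·e^{a·|Im λ|} for all λ ∈ ℂ with |λ| ≥ R whose distance from every zero of φ¹ is at least δ. -/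
open Complex

private lemma aux_sub (a : ℝ) (ha : 0 < a) (p q : ℂ) (hp : p ≠ 0) (hq : q ≠ 0)
    (δ : ℝ) (hδ : 0 < δ) :
    ∃ C : ℝ, 0 < C ∧ ∀ lam : ℂ,
      (∀ z : ℂ, p * Complex.exp (z * a * I) + q * Complex.exp (-(z * a * I)) = 0 →
        δ ≤ dist lam z) →
      C * Real.exp (a * |lam.im|) ≤
        ‖p * Complex.exp (lam * a * I) + q * Complex.exp (-(lam * a * I))‖ := by
  set h : ℂ → ℂ := fun z => p * Complex.exp (z * a * I) + q * Complex.exp (-(z * a * I)) with hh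
  have hcont : Continuous h := by fun_prop
  set ω : ℝ := 2 * Real.pi / a with hωdef
  have hω0 : 0 < ω := by positivity
  have ha' : (a : ℂ) ≠ 0 := Complex.ofReal_ne_zero.mpr ha.ne'
  have hωa : (ω : ℂ) * (a : ℂ) = 2 * Real.pi := by
    rw [hωdef]
    push_cast
    field_simp
  have hper : ∀ (x : ℂ) (k : ℤ), h (x + (k : ℂ) * (ω : ℂ)) = h x := by
    intro x k
    have e1 : (x + (k : ℂ) * ω) * a * I = x * a * I + (k : ℂ) * (2 * Real.pi * I) := by
      linear_combination ((k : ℂ) * I) * hωa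
    have e2 : -((x + (k : ℂ) * ω) * a * I) = -(x * a * I) + ((-k : ℤ) : ℂ) * (2 * Real.pi * I) := by
      push_cast
      linear_combination (-(k : ℂ) * I) * hωa
    simp only [hh]
    rw [e2, e1, Complex.exp_add, Complex.exp_add, Complex.exp_int_mul_two_pi_mul_I,
      Complex.exp_int_mul_two_pi_mul_I, mul_one, mul_one]
  set Z : Set ℂ := {z : ℂ | h z = 0} with hZ
  have hZper : ∀ z ∈ Z, ∀ k : ℤ, z + (k : ℂ) * (ω : ℂ) ∈ Z := by
    intro z hz k
    have : h (z + (k : ℂ) * (ω : ℂ)) = 0 := by rw [hper z k]; exact hz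
    exact this
  set P : ℝ := ‖p‖ with hPdef
  set Q : ℝ := ‖q‖ with hQdef
  have hP0 : 0 < P := norm_pos_iff.mpr hp
  have hQ0 : 0 < Q := norm_pos_iff.mpr hq
  set M : ℝ := 2 * P / Q + 2 * Q / P + 1 with hMdef
  have hM1 : 1 ≤ M := by
    have hA : 0 ≤ 2 * P / Q := by positivity
    have hB : 0 ≤ 2 * Q / P := by positivity
    rw [hMdef]
    linarith
  have hM0 : 0 < M := lt_of_lt_of_le one_pos hM1
  set T : ℝ := Real.log M / (2 * a) with hTdef
  have hT0 : 0 ≤ T := div_nonneg (Real.log_nonneg hM1) (by positivity)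
  have hexpT : Real.exp (2 * a * T) = M := by
    have : 2 * a * T = Real.log M := by
      rw [hTdef]
      field_simp
    rw [this, Real.exp_log hM0]
  have habsE : ∀ z : ℂ, ‖Complex.exp (z * a * I)‖ = Real.exp (-(a * z.im)) := by
    intro z
    rw [Complex.norm_exp]
    congr 1
    simp [Complex.mul_re, Complex.mul_im]
    ring
  have habsE' : ∀ z : ℂ, ‖Complex.exp (-(z * a * I))‖ = Real.exp (a * z.im) := by
    intro z
    rw [Complex.norm_exp]
    congr 1
    simp [Complex.mul_re, Complex.mul_im]
    ring
  have hlow1 : ∀ lam : ℂ,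
      Q * Real.exp (a * lam.im) - P * Real.exp (-(a * lam.im)) ≤ ‖h lam‖ := by
    intro lam
    have e1 : ‖q * Complex.exp (-(lam * a * I))‖ = Q * Real.exp (a * lam.im) := by
      rw [norm_mul, habsE']
    have e2 : ‖p * Complex.exp (lam * a * I)‖ = P * Real.exp (-(a * lam.im)) := by
      rw [norm_mul, habsE]
    have e3 := norm_sub_norm_le (q * Complex.exp (-(lam * a * I)))
      (-(p * Complex.exp (lam * a * I)))
    simp only [norm_neg, sub_neg_eq_add] at e3
    calc Q * Real.exp (a * lam.im) - P * Real.exp (-(a * lam.im))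
        = ‖q * Complex.exp (-(lam * a * I))‖
          - ‖p * Complex.exp (lam * a * I)‖ := by rw [e1, e2]
      _ ≤ ‖q * Complex.exp (-(lam * a * I)) + p * Complex.exp (lam * a * I)‖ := e3
      _ = ‖h lam‖ := by rw [hh]; simp only []; rw [add_comm]
  have hlow2 : ∀ lam : ℂ,
      P * Real.exp (-(a * lam.im)) - Q * Real.exp (a * lam.im) ≤ ‖h lam‖ := by
    intro lam
    have e1 : ‖q * Complex.exp (-(lam * a * I))‖ = Q * Real.exp (a * lam.im) := by
      rw [norm_mul, habsE']
    have e2 : ‖p * Complex.exp (lam * a * I)‖ = P * Real.exp (-(a * lam.im)) := by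
      rw [norm_mul, habsE]
    have e3 := norm_sub_norm_le (p * Complex.exp (lam * a * I))
      (-(q * Complex.exp (-(lam * a * I))))
    simp only [norm_neg, sub_neg_eq_add] at e3
    calc P * Real.exp (-(a * lam.im)) - Q * Real.exp (a * lam.im)
        = ‖p * Complex.exp (lam * a * I)‖
          - ‖q * Complex.exp (-(lam * a * I))‖ := by rw [e1, e2]
      _ ≤ ‖p * Complex.exp (lam * a * I) + q * Complex.exp (-(lam * a * I))‖ := e3
      _ = ‖h lam‖ := rfl
  set S : Set ℂ := {l : ℂ | l.re ∈ Set.Icc 0 ω ∧ |l.im| ≤ T ∧ ∀ z ∈ Z, δ ≤ dist l z} with hS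
  have hSclosed : IsClosed S := by
    have hSeq : S = (Complex.re ⁻¹' Set.Icc 0 ω) ∩ ((fun l : ℂ => |l.im|) ⁻¹' Set.Iic T)
        ∩ (⋂ z ∈ Z, {l : ℂ | δ ≤ dist l z}) := by
      ext l
      simp only [hS, Set.mem_setOf_eq, Set.mem_inter_iff, Set.mem_preimage, Set.mem_Iic,
        Set.mem_iInter]
      tauto
    rw [hSeq]
    refine (((isClosed_Icc.preimage Complex.continuous_re)).inter
      (isClosed_Iic.preimage (Complex.continuous_im.abs))).inter ?_
    exact isClosed_biInter fun z _ => isClosed_le continuous_const (continuous_id.dist continuous_const)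
  have hSsub : S ⊆ Metric.closedBall 0 (ω + T) := by
    intro l hl
    obtain ⟨hre, him, -⟩ := hl
    rw [Metric.mem_closedBall, dist_zero_right]
    calc ‖l‖ ≤ |l.re| + |l.im| := Complex.norm_le_abs_re_add_abs_im l
      _ ≤ ω + T := add_le_add (abs_le.mpr ⟨by linarith [hre.1], hre.2⟩) him
  have hScomp : IsCompact S := (isCompact_closedBall 0 (ω + T)).of_isClosed_subset hSclosed hSsub
  obtain ⟨c₀, hc₀pos, hc₀⟩ : ∃ c₀ : ℝ, 0 < c₀ ∧ ∀ l ∈ S, c₀ ≤ ‖h l‖ := by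
    rcases Set.eq_empty_or_nonempty S with hSe | hSne
    · exact ⟨1, one_pos, by simp [hSe]⟩
    · obtain ⟨x₀, hx₀S, hx₀⟩ := hScomp.exists_isMinOn hSne
        ((continuous_norm.comp hcont).continuousOn)
      refine ⟨‖h x₀‖, ?_, fun l hl => isMinOn_iff.mp hx₀ l hl⟩
      have hx₀ne : h x₀ ≠ 0 := by
        intro hzero
        have hmem : x₀ ∈ Z := hzero
        have := hx₀S.2.2 x₀ hmem
        simp only [dist_self] at this
        linarith
      exact norm_pos_iff.mpr hx₀ne
  have hstrip : ∀ lam : ℂ, |lam.im| ≤ T → (∀ z ∈ Z, δ ≤ dist lam z) →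
      c₀ ≤ ‖h lam‖ := by
    intro lam him hd
    set k : ℤ := ⌊lam.re / ω⌋ with hk
    set lam' : ℂ := lam - (k : ℂ) * (ω : ℂ) with hlam'
    have hre' : lam'.re = lam.re - (k : ℝ) * ω := by
      simp [hlam']
    have him' : lam'.im = lam.im := by
      simp [hlam']
    have hfr : lam.re - (k : ℝ) * ω = ω * Int.fract (lam.re / ω) := by
      rw [Int.fract, hk]
      field_simp
    have hre1 : 0 ≤ lam'.re := by
      rw [hre', hfr]
      exact mul_nonneg hω0.le (Int.fract_nonneg _)
    have hre2 : lam'.re ≤ ω := by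
      rw [hre', hfr]
      calc ω * Int.fract (lam.re / ω) ≤ ω * 1 :=
            mul_le_mul_of_nonneg_left (Int.fract_lt_one _).le hω0.le
        _ = ω := mul_one ω
    have hmem : lam' ∈ S := by
      refine ⟨⟨hre1, hre2⟩, by rw [him']; exact him, ?_⟩
      intro z hz
      have hz' : z + (k : ℂ) * (ω : ℂ) ∈ Z := hZper z hz k
      have hdz := hd _ hz'
      have hdist : dist lam' z = dist lam (z + (k : ℂ) * (ω : ℂ)) := by
        rw [Complex.dist_eq, Complex.dist_eq, hlam']
        congr 1
        ring
      rw [hdist]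
      exact hdz
    have heq : h lam = h lam' := by
      have := hper lam' k
      rw [show lam' + (k : ℂ) * (ω : ℂ) = lam by rw [hlam']; ring] at this
      exact this
    rw [heq]
    exact hc₀ lam' hmem
  refine ⟨min (min (Q / 2) (P / 2)) (c₀ * Real.exp (-(a * T))), ?_, ?_⟩
  · exact lt_min (lt_min (by positivity) (by positivity)) (by positivity)
  intro lam hd
  have hd' : ∀ z ∈ Z, δ ≤ dist lam z := fun z hz => hd z hz
  rcases le_or_gt |lam.im| T with hcase | hcase
  · -- strip case
    have hb := hstrip lam hcase hd'
    have h2 : Real.exp (a * |lam.im|) ≤ Real.exp (a * T) :=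
      Real.exp_le_exp.mpr (by nlinarith [abs_nonneg lam.im])
    calc min (min (Q / 2) (P / 2)) (c₀ * Real.exp (-(a * T))) * Real.exp (a * |lam.im|)
        ≤ (c₀ * Real.exp (-(a * T))) * Real.exp (a * |lam.im|) :=
          mul_le_mul_of_nonneg_right (min_le_right _ _) (Real.exp_nonneg _)
      _ ≤ (c₀ * Real.exp (-(a * T))) * Real.exp (a * T) :=
          mul_le_mul_of_nonneg_left h2 (by positivity)
      _ = c₀ := by rw [mul_assoc, ← Real.exp_add]; simp
      _ ≤ _ := hb
  · rcases le_or_gt 0 lam.im with hsgn | hsgn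
    · -- upper half
      have habsim : |lam.im| = lam.im := abs_of_nonneg hsgn
      have hTm : T < lam.im := by rwa [habsim] at hcase
      have e1 : M ≤ Real.exp (2 * a * lam.im) := by
        rw [← hexpT]
        exact Real.exp_le_exp.mpr (by nlinarith)
      have e2 : 2 * P / Q ≤ M := by
        have hB : 0 ≤ 2 * Q / P := by positivity
        rw [hMdef]; linarith
      have e3 : 2 * P ≤ Q * Real.exp (2 * a * lam.im) := by
        have := (div_le_iff₀ hQ0).mp (e2.trans e1)
        linarith
      have eprod : Real.exp (2 * a * lam.im) * Real.exp (-(a * lam.im))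
          = Real.exp (a * lam.im) := by
        rw [← Real.exp_add]; ring_nf
      have hkey : Q / 2 * Real.exp (a * lam.im) ≤ ‖h lam‖ := by
        have hge := hlow1 lam
        have hm := mul_le_mul_of_nonneg_right e3 (Real.exp_nonneg (-(a * lam.im)))
        have hQprod : Q * (Real.exp (2 * a * lam.im) * Real.exp (-(a * lam.im)))
            = Q * Real.exp (a * lam.im) := by rw [eprod]
        nlinarith [hge, hm, hQprod]
      calc min (min (Q / 2) (P / 2)) (c₀ * Real.exp (-(a * T))) * Real.exp (a * |lam.im|)
          ≤ Q / 2 * Real.exp (a * lam.im) := by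
            rw [habsim]
            exact mul_le_mul_of_nonneg_right ((min_le_left _ _).trans (min_le_left _ _))
              (Real.exp_nonneg _)
        _ ≤ _ := hkey
    · -- lower half
      have habsim : |lam.im| = -lam.im := abs_of_neg hsgn
      have hTm : T < -lam.im := by rwa [habsim] at hcase
      have e1 : M ≤ Real.exp (2 * a * (-lam.im)) := by
        rw [← hexpT]
        exact Real.exp_le_exp.mpr (by nlinarith)
      have e2 : 2 * Q / P ≤ M := by
        have hA : 0 ≤ 2 * P / Q := by positivity
        rw [hMdef]; linarith
      have e3 : 2 * Q ≤ P * Real.exp (2 * a * (-lam.im)) := by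
        have := (div_le_iff₀ hP0).mp (e2.trans e1)
        linarith
      have eprod : Real.exp (2 * a * (-lam.im)) * Real.exp (a * lam.im)
          = Real.exp (-(a * lam.im)) := by
        rw [← Real.exp_add]; ring_nf
      have hkey : P / 2 * Real.exp (-(a * lam.im)) ≤ ‖h lam‖ := by
        have hge := hlow2 lam
        have hm := mul_le_mul_of_nonneg_right e3 (Real.exp_nonneg (a * lam.im))
        have hPprod : P * (Real.exp (2 * a * (-lam.im)) * Real.exp (a * lam.im))
            = P * Real.exp (-(a * lam.im)) := by rw [eprod]
        nlinarith [hge, hm, hPprod]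
      calc min (min (Q / 2) (P / 2)) (c₀ * Real.exp (-(a * T))) * Real.exp (a * |lam.im|)
          ≤ P / 2 * Real.exp (-(a * lam.im)) := by
            rw [habsim, show a * -lam.im = -(a * lam.im) by ring]
            exact mul_le_mul_of_nonneg_right ((min_le_left _ _).trans (min_le_right _ _))
              (Real.exp_nonneg _)
        _ ≤ _ := hkey

theorem stmt17 (a : ℝ) (ha : 0 < a) (σ₁ σ₂ : ℝ) (h1 : σ₁ ≠ σ₂) (h2 : σ₁ ≠ -σ₂)
    (φ : ℂ → ℂ)
    (hφ : ∀ lam : ℂ, φ lam = lam * (σ₁ * Complex.cos (lam * a) + Complex.I * σ₂ * Complex.sin (lam * a))) :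
    ∀ δ : ℝ, 0 < δ → ∃ C R : ℝ, 0 < C ∧ 0 < R ∧
      ∀ lam : ℂ, R ≤ ‖lam‖ → (∀ z : ℂ, φ z = 0 → δ ≤ dist lam z) →
        C * ‖lam‖ * Real.exp (a * |lam.im|) ≤ ‖φ lam‖ := by
  intro δ hδ
  set p : ℂ := ((σ₁ + σ₂ : ℝ) : ℂ) / 2 with hp
  set q : ℂ := ((σ₁ - σ₂ : ℝ) : ℂ) / 2 with hqd
  have hs1 : σ₁ + σ₂ ≠ 0 := fun hc => h2 (by linarith)
  have hs2 : σ₁ - σ₂ ≠ 0 := sub_ne_zero.mpr h1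
  have hpne : p ≠ 0 := by
    rw [hp]
    simp only [ne_eq, div_eq_zero_iff, OfNat.ofNat_ne_zero, or_false, Complex.ofReal_eq_zero]
    exact hs1
  have hqne : q ≠ 0 := by
    rw [hqd]
    simp only [ne_eq, div_eq_zero_iff, OfNat.ofNat_ne_zero, or_false, Complex.ofReal_eq_zero]
    exact hs2
  have key : ∀ z : ℂ, (σ₁ : ℂ) * Complex.cos (z * a) + Complex.I * σ₂ * Complex.sin (z * a)
      = p * Complex.exp (z * a * I) + q * Complex.exp (-(z * a * I)) := by
    intro z
    rw [Complex.cos, Complex.sin, hp, hqd]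
    push_cast
    rw [show -(z * (a : ℂ)) * I = -(z * (a : ℂ) * I) from by ring]
    linear_combination ((σ₂ : ℂ) * (Complex.exp (-(z * (a : ℂ) * I))
      - Complex.exp (z * (a : ℂ) * I)) / 2) * Complex.I_sq
  obtain ⟨C, hC, hmain⟩ := aux_sub a ha p q hpne hqne δ hδ
  refine ⟨C, 1, hC, one_pos, ?_⟩
  intro lam _ hdist
  have hd : ∀ z : ℂ, p * Complex.exp (z * a * I) + q * Complex.exp (-(z * a * I)) = 0 →
      δ ≤ dist lam z := by
    intro z hz
    apply hdist
    rw [hφ, key z, hz, mul_zero]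
  have hb := hmain lam hd
  rw [hφ, norm_mul, key lam]
  calc C * ‖lam‖ * Real.exp (a * |lam.im|)
      = ‖lam‖ * (C * Real.exp (a * |lam.im|)) := by ring
    _ ≤ ‖lam‖
        * ‖p * Complex.exp (lam * a * I) + q * Complex.exp (-(lam * a * I))‖ :=
      mul_le_mul_of_nonneg_left hb (norm_nonneg lam)
end

section
/- Let y : ℂ × [0,a] → ℂ be such that for each λ, x ↦ y(λ,x) solves -y'' + q·y = λ²·y with y(λ,0) = 1, y'(λ,0) = β₀ + iα₀λ, where q is continuous, and y is differentiable in λ with derivative ẏ. Then for all λ ∈ ℂ: 2λ·∫₀ᵃ y(λ,x)² dx = y'(λ,a)·ẏ(λ,a) - ẏ'(λ,a)·y(λ,a) + iα₀. -/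
open Complex MeasureTheory Filter

theorem stmt18 (a : ℝ) (ha : 0 < a) (q : ℝ → ℂ) (hq : ContinuousOn q (Set.Icc 0 a))
    (α₀ : ℝ) (β₀ : ℂ)
    (y yd yl yld : ℂ → ℝ → ℂ)
    (hy : ∀ (lam : ℂ) (x : ℝ), x ∈ Set.Icc 0 a → HasDerivAt (y lam) (yd lam x) x)
    (hyd : ∀ (lam : ℂ) (x : ℝ), x ∈ Set.Icc 0 a →
      HasDerivAt (yd lam) (q x * y lam x - lam ^ 2 * y lam x) x)
    (hyl : ∀ (lam : ℂ) (x : ℝ), x ∈ Set.Icc 0 a →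
      HasDerivAt (fun l : ℂ => y l x) (yl lam x) lam)
    (hyld : ∀ (lam : ℂ) (x : ℝ), x ∈ Set.Icc 0 a →
      HasDerivAt (fun l : ℂ => yd l x) (yld lam x) lam)
    (hy0 : ∀ lam : ℂ, y lam 0 = 1)
    (hyd0 : ∀ lam : ℂ, yd lam 0 = β₀ + Complex.I * α₀ * lam) :
    ∀ lam : ℂ, 2 * lam * ∫ x in (0:ℝ)..a, (y lam x) ^ 2
      = yd lam a * yl lam a - yld lam a * y lam a + Complex.I * α₀ := by
  intro lam
  have haIcc : a ∈ Set.Icc (0:ℝ) a := ⟨ha.le, le_rfl⟩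
  have h0Icc : (0:ℝ) ∈ Set.Icc (0:ℝ) a := ⟨le_rfl, ha.le⟩
  -- continuity in x
  have hcont : ∀ μ : ℂ, ContinuousOn (y μ) (Set.Icc 0 a) := fun μ x hx =>
    (hy μ x hx).continuousAt.continuousWithinAt
  have hcontd : ∀ μ : ℂ, ContinuousOn (yd μ) (Set.Icc 0 a) := fun μ x hx =>
    (hyd μ x hx).continuousAt.continuousWithinAt
  set J : ℂ → ℂ := fun μ => ∫ x in (0:ℝ)..a, y lam x * y μ x with hJdef
  -- Wronskian identity
  have key : ∀ μ : ℂ, (μ^2 - lam^2) * J μ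
      = yd lam a * y μ a - yd μ a * y lam a - Complex.I * α₀ * (lam - μ) := by
    intro μ
    have hw : ∀ x ∈ Set.uIcc (0:ℝ) a,
        HasDerivAt (fun t => yd lam t * y μ t - yd μ t * y lam t)
          ((μ^2 - lam^2) * (y lam x * y μ x)) x := by
      intro x hx
      rw [Set.uIcc_of_le ha.le] at hx
      have h1 := ((hyd lam x hx).mul (hy μ x hx)).sub ((hyd μ x hx).mul (hy lam x hx))
      refine h1.congr_deriv ?_
      ring
    have hint : IntervalIntegrable (fun x => (μ^2 - lam^2) * (y lam x * y μ x))
        MeasureTheory.volume 0 a := by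
      apply ContinuousOn.intervalIntegrable
      rw [Set.uIcc_of_le ha.le]
      exact continuousOn_const.mul ((hcont lam).mul (hcont μ))
    have hFTC := intervalIntegral.integral_eq_sub_of_hasDerivAt hw hint
    rw [intervalIntegral.integral_const_mul] at hFTC
    rw [hJdef]
    simp only []
    rw [hFTC, hy0, hy0, hyd0, hyd0]
    ring
  -- derivative values at x = 0 (not needed) ; bound on y via Gronwall
  obtain ⟨C, hC⟩ := (isCompact_Icc (a := (0:ℝ)) (b := a)).exists_bound_of_continuousOn hq
  set K₀ : ℝ := max 1 (C + (‖lam‖ + 1)^2) with hK₀def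
  have hK₀1 : (1:ℝ) ≤ K₀ := le_max_left _ _
  have hK₀0 : (0:ℝ) ≤ K₀ := le_trans zero_le_one hK₀1
  set δ₀ : ℝ := max 1 (‖β₀‖ + |α₀| * (‖lam‖ + 1)) with hδ₀def
  have hδ₀1 : (1:ℝ) ≤ δ₀ := le_max_left _ _
  have hδ₀0 : (0:ℝ) ≤ δ₀ := le_trans zero_le_one hδ₀1
  set B : ℝ := δ₀ * Real.exp (K₀ * a) with hBdef
  have hB0 : 0 ≤ B := mul_nonneg hδ₀0 (Real.exp_pos _).le
  have hbound : ∀ μ ∈ Metric.closedBall lam 1, ∀ x ∈ Set.Icc (0:ℝ) a, ‖y μ x‖ ≤ B := by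
    intro μ hμ x hx
    have hμn : ‖μ‖ ≤ ‖lam‖ + 1 := by
      have h1 : ‖μ - lam‖ ≤ 1 := by
        simpa [dist_eq_norm] using Metric.mem_closedBall.mp hμ
      calc ‖μ‖ = ‖μ - lam + lam‖ := by ring_nf
        _ ≤ ‖μ - lam‖ + ‖lam‖ := norm_add_le _ _
        _ ≤ ‖lam‖ + 1 := by linarith
    have hf : ContinuousOn (fun t => (y μ t, yd μ t)) (Set.Icc 0 a) :=
      (hcont μ).prodMk (hcontd μ)
    have hf' : ∀ t ∈ Set.Ico (0:ℝ) a, HasDerivWithinAt (fun t => (y μ t, yd μ t))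
        ((yd μ t, q t * y μ t - μ^2 * y μ t)) (Set.Ici t) t := fun t ht =>
      ((hy μ t (Set.Ico_subset_Icc_self ht)).prodMk
        (hyd μ t (Set.Ico_subset_Icc_self ht))).hasDerivWithinAt
    have h0 : ‖((y μ 0 : ℂ), yd μ 0)‖ ≤ δ₀ := by
      rw [hy0, hyd0, Prod.norm_def]
      apply max_le
      · simpa using hδ₀1
      · refine le_trans (le_trans (norm_add_le _ _) ?_) (le_max_right _ _)
        have : ‖Complex.I * (α₀:ℂ) * μ‖ ≤ |α₀| * (‖lam‖ + 1) := by
          rw [norm_mul, norm_mul, Complex.norm_I, one_mul, Complex.norm_real]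
          exact mul_le_mul_of_nonneg_left hμn (norm_nonneg _)
        simpa [Real.norm_eq_abs] using add_le_add_left this ‖β₀‖
    have hKb : ∀ t ∈ Set.Ico (0:ℝ) a,
        ‖((yd μ t : ℂ), q t * y μ t - μ^2 * y μ t)‖ ≤ K₀ * ‖((y μ t : ℂ), yd μ t)‖ + 0 := by
      intro t ht
      rw [add_zero, Prod.norm_def, Prod.norm_def]
      have hmax0 : (0:ℝ) ≤ max ‖y μ t‖ ‖yd μ t‖ := le_trans (norm_nonneg _) (le_max_left _ _)
      apply max_le
      · calc ‖yd μ t‖ ≤ max ‖y μ t‖ ‖yd μ t‖ := le_max_right _ _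
          _ ≤ K₀ * max ‖y μ t‖ ‖yd μ t‖ := le_mul_of_one_le_left hmax0 hK₀1
      · have h1 : ‖q t * y μ t - μ^2 * y μ t‖ ≤ (‖q t‖ + ‖μ‖^2) * ‖y μ t‖ := by
          calc ‖q t * y μ t - μ^2 * y μ t‖ ≤ ‖q t * y μ t‖ + ‖μ^2 * y μ t‖ := norm_sub_le _ _
            _ = (‖q t‖ + ‖μ‖^2) * ‖y μ t‖ := by rw [norm_mul, norm_mul, norm_pow]; ring
        have h2 : ‖q t‖ + ‖μ‖^2 ≤ K₀ := by
          have hqt : ‖q t‖ ≤ C := hC t (Set.Ico_subset_Icc_self ht)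
          have hμ2 : ‖μ‖^2 ≤ (‖lam‖ + 1)^2 := by
            apply pow_le_pow_left₀ (norm_nonneg _) hμn
          refine le_trans ?_ (le_max_right 1 _)
          linarith
        calc ‖q t * y μ t - μ^2 * y μ t‖ ≤ (‖q t‖ + ‖μ‖^2) * ‖y μ t‖ := h1
          _ ≤ K₀ * ‖y μ t‖ := by
              apply mul_le_mul_of_nonneg_right h2 (norm_nonneg _)
          _ ≤ K₀ * max ‖y μ t‖ ‖yd μ t‖ :=
              mul_le_mul_of_nonneg_left (le_max_left _ _) hK₀0
    have hg := norm_le_gronwallBound_of_norm_deriv_right_le hf hf' h0 hKb x hx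
    rw [sub_zero, gronwallBound_ε0] at hg
    have hy_le : ‖y μ x‖ ≤ δ₀ * Real.exp (K₀ * x) := le_trans (norm_fst_le ((y μ x, yd μ x) : ℂ × ℂ)) hg
    have hexp : Real.exp (K₀ * x) ≤ Real.exp (K₀ * a) :=
      Real.exp_le_exp.mpr (mul_le_mul_of_nonneg_left hx.2 hK₀0)
    calc ‖y μ x‖ ≤ δ₀ * Real.exp (K₀ * x) := hy_le
      _ ≤ B := mul_le_mul_of_nonneg_left hexp hδ₀0
  -- J is continuous at lam along the punctured neighborhood
  have hball : ∀ᶠ μ in nhdsWithin lam ({lam}ᶜ), μ ∈ Metric.closedBall lam 1 :=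
    nhdsWithin_le_nhds (Metric.closedBall_mem_nhds lam one_pos)
  have hJtend : Tendsto J (nhdsWithin lam ({lam}ᶜ)) (nhds (J lam)) := by
    rw [hJdef]
    simp only []
    apply intervalIntegral.tendsto_integral_filter_of_dominated_convergence (fun _ => B * B)
    · apply Filter.Eventually.of_forall
      intro μ
      rw [Set.uIoc_of_le ha.le]
      exact (((hcont lam).mul (hcont μ)).mono Set.Ioc_subset_Icc_self).aestronglyMeasurable
        measurableSet_Ioc
    · filter_upwards [hball] with μ hμ
      apply Filter.Eventually.of_forall
      intro x hx
      rw [Set.uIoc_of_le ha.le] at hx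
      have hx' : x ∈ Set.Icc (0:ℝ) a := Set.Ioc_subset_Icc_self hx
      rw [norm_mul]
      exact mul_le_mul (hbound lam (Metric.mem_closedBall_self one_pos.le) x hx')
        (hbound μ hμ x hx') (norm_nonneg _) hB0
    · exact intervalIntegrable_const
    · apply Filter.Eventually.of_forall
      intro x hx
      rw [Set.uIoc_of_le ha.le] at hx
      have hx' : x ∈ Set.Icc (0:ℝ) a := Set.Ioc_subset_Icc_self hx
      exact (tendsto_const_nhds.mul (hyl lam x hx').continuousAt).mono_left nhdsWithin_le_nhds
  -- the difference quotient
  set g : ℂ → ℂ := fun μ => yd lam a * y μ a - yd μ a * y lam a - Complex.I * α₀ * (lam - μ)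
    with hgdef
  set D : ℂ := yd lam a * yl lam a - yld lam a * y lam a + Complex.I * α₀ with hDdef
  have hg : HasDerivAt g D lam := by
    have h1 := (hyl lam a haIcc).const_mul (yd lam a)
    have h2 := (hyld lam a haIcc).mul_const (y lam a)
    have h3 : HasDerivAt (fun μ : ℂ => Complex.I * (α₀:ℂ) * (lam - μ)) (-(Complex.I * α₀)) lam := by
      have := ((hasDerivAt_id lam).const_sub lam).const_mul (Complex.I * (α₀:ℂ))
      refine this.congr_deriv ?_
      ring
    have h4 := (h1.sub h2).sub h3
    refine h4.congr_deriv ?_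
    rw [hDdef]; ring
  have hglam : g lam = 0 := by rw [hgdef]; simp only []; ring
  have hslope : Tendsto (slope g lam) (nhdsWithin lam ({lam}ᶜ)) (nhds D) :=
    hasDerivAt_iff_tendsto_slope.mp hg
  have heq : ∀ᶠ μ in nhdsWithin lam ({lam}ᶜ), slope g lam μ = (μ + lam) * J μ := by
    filter_upwards [self_mem_nhdsWithin] with μ hμ
    have hne : μ - lam ≠ 0 := sub_ne_zero.mpr (Set.mem_compl_singleton_iff.mp hμ)
    rw [slope_def_field, hglam, sub_zero]
    have hkey : g μ = (μ^2 - lam^2) * J μ := (key μ).symm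
    rw [hkey]
    field_simp
    ring
  have h1 : Tendsto (fun μ => (μ + lam) * J μ) (nhdsWithin lam ({lam}ᶜ)) (nhds D) :=
    hslope.congr' heq
  have h2 : Tendsto (fun μ => (μ + lam) * J μ) (nhdsWithin lam ({lam}ᶜ))
      (nhds (2 * lam * J lam)) := by
    have ht : Tendsto (fun μ : ℂ => μ + lam) (nhdsWithin lam ({lam}ᶜ)) (nhds (lam + lam)) :=
      ((continuous_id.add continuous_const).tendsto lam).mono_left nhdsWithin_le_nhds
    have := ht.mul hJtend
    convert this using 2
    ring
  have hfin : D = 2 * lam * J lam := tendsto_nhds_unique h1 h2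
  have hJlam : J lam = ∫ x in (0:ℝ)..a, (y lam x)^2 := by
    rw [hJdef]
    simp only [sq]
  rw [← hJlam, ← hfin, hDdef]
end
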